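/- arXiv:1806.01982 — 6 statements merged into one kernel-verified Lean document; each statement's English description precedes it below -/
import Mathlib

section
/- Let u be a smooth function on an open set U ⊂ ℝ² satisfying -Δ_∞ u - ε Δu = 0 in U for some ε > 0. Then at every point of U, (-det D²u)·|Du|² = |D²u Du|² + ε(Δu)². -/
noncomputable def d1 (f : ℝ × ℝ → ℝ) (x : ℝ × ℝ) : ℝ := fderiv ℝ f x (1, 0)
noncomputable def d2 (f : ℝ × ℝ → ℝ) (x : ℝ × ℝ) : ℝ := fderiv ℝ f x (0, 1)

/-- If `u` is smooth on open `U ⊂ ℝ²` and `-Δ_∞ u - εΔu = 0` with `ε > 0`, then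
`(-det D²u)·|Du|² = |D²u Du|² + ε(Δu)²` everywhere in `U`. -/
theorem stmt2 (U : Set (ℝ × ℝ)) (hU : IsOpen U) (ε : ℝ) (hε : 0 < ε) (u : ℝ × ℝ → ℝ)
    (hu : ContDiffOn ℝ (⊤ : ℕ∞) u U)
    (heq : ∀ x ∈ U,
      (d1 u x) ^ 2 * d1 (d1 u) x + 2 * d1 u x * d2 u x * d1 (d2 u) x
        + (d2 u x) ^ 2 * d2 (d2 u) x
      + ε * (d1 (d1 u) x + d2 (d2 u) x) = 0)
    (x : ℝ × ℝ) (hx : x ∈ U) :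
    (-(d1 (d1 u) x * d2 (d2 u) x - (d1 (d2 u) x) ^ 2)) * ((d1 u x) ^ 2 + (d2 u x) ^ 2) =
      ((d1 (d1 u) x * d1 u x + d1 (d2 u) x * d2 u x) ^ 2
        + (d2 (d1 u) x * d1 u x + d2 (d2 u) x * d2 u x) ^ 2)
      + ε * (d1 (d1 u) x + d2 (d2 u) x) ^ 2 := by
  have hmem : U ∈ nhds x := hU.mem_nhds hx
  have hdiff : ∀ᶠ y in nhds x, HasFDerivAt u (fderiv ℝ u y) y := by
    filter_upwards [hmem] with y hy
    exact ((hu.contDiffAt (hU.mem_nhds hy)).differentiableAt (by simp)).hasFDerivAt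
  have hcd : ContDiffAt ℝ (⊤ : ℕ∞) u x := hu.contDiffAt hmem
  have hf'cd : ContDiffAt ℝ (⊤ : ℕ∞) (fderiv ℝ u) x := hcd.fderiv_right (by simp)
  have hf'' : HasFDerivAt (fderiv ℝ u) (fderiv ℝ (fderiv ℝ u) x) x :=
    (hf'cd.differentiableAt (by simp)).hasFDerivAt
  set f'' := fderiv ℝ (fderiv ℝ u) x with hf''def
  have hsymm : f'' (0, 1) (1, 0) = f'' (1, 0) (0, 1) :=
    second_derivative_symmetric_of_eventually hdiff hf'' _ _
  have key : ∀ v w : ℝ × ℝ, fderiv ℝ (fun y => fderiv ℝ u y v) x w = f'' w v := by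
    intro v w
    have h := hf''.clm_apply (hasFDerivAt_const v x)
    rw [h.fderiv]
    simp
  have h12 : d2 (d1 u) x = f'' (0, 1) (1, 0) := key (1, 0) (0, 1)
  have h21 : d1 (d2 u) x = f'' (1, 0) (0, 1) := key (0, 1) (1, 0)
  have hsym : d2 (d1 u) x = d1 (d2 u) x := by rw [h12, h21, hsymm]
  have hpde := heq x hx
  rw [hsym]
  linear_combination (-(d1 (d1 u) x + d2 (d2 u) x)) * hpde
end

section
/- Let u be a smooth function on an open set U ⊂ ℝ² satisfying -Δ_∞ u - ε Δu = 0 for some ε > 0. Then at every point z ∈ U where Du(z) ≠ 0, one has -det D²u(z) ≥ 0. -/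
/-- If `u` is smooth on open `U ⊂ ℝ²` with `-Δ_∞ u - εΔu = 0`, `ε > 0`, then
`-det D²u(z) ≥ 0` at every `z ∈ U` with `Du(z) ≠ 0`. -/
theorem stmt3 (U : Set (ℝ × ℝ)) (hU : IsOpen U) (ε : ℝ) (hε : 0 < ε) (u : ℝ × ℝ → ℝ)
    (hu : ContDiffOn ℝ (⊤ : ℕ∞) u U)
    (heq : ∀ x ∈ U,
      (d1 u x) ^ 2 * d1 (d1 u) x + 2 * d1 u x * d2 u x * d1 (d2 u) x
        + (d2 u x) ^ 2 * d2 (d2 u) x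
      + ε * (d1 (d1 u) x + d2 (d2 u) x) = 0)
    (z : ℝ × ℝ) (hz : z ∈ U) (hDu : (d1 u z, d2 u z) ≠ (0, 0)) :
    0 ≤ -(d1 (d1 u) z * d2 (d2 u) z - (d1 (d2 u) z) ^ 2) := by
  have h := heq z hz
  set p := d1 u z
  set q := d2 u z
  set a := d1 (d1 u) z
  set b := d1 (d2 u) z
  set c := d2 (d2 u) z
  have hpq : 0 < p ^ 2 + q ^ 2 := by
    rcases eq_or_ne p 0 with hp | hp
    · rcases eq_or_ne q 0 with hq | hq
      · exact absurd (Prod.ext hp hq) hDu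
      · positivity
    · positivity
  -- identity: (b²-ac)(p²+q²) = (ap+bq)² + (bp+cq)² + ε(a+c)²
  have key : (b ^ 2 - a * c) * (p ^ 2 + q ^ 2)
      = (a * p + b * q) ^ 2 + (b * p + c * q) ^ 2 + ε * (a + c) ^ 2 := by
    linear_combination -(a + c) * h
  have hrhs : 0 ≤ (b ^ 2 - a * c) * (p ^ 2 + q ^ 2) := by
    rw [key]; positivity
  nlinarith [mul_pos hpq hpq]
end

section
/- Let u be a smooth function on an open connected set U ⊂ ℝ² satisfying -Δ_∞ u - ε Δu = 0 for some ε > 0. Then -det D²u ≥ 0 everywhere in U (including at critical points of u). -/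
/-- If `u` is smooth on an open connected `U ⊂ ℝ²` with `-Δ_∞ u - εΔu = 0`, `ε > 0`, then
`-det D²u ≥ 0` everywhere in `U`, including at critical points of `u`. -/
theorem stmt4 (U : Set (ℝ × ℝ)) (hU : IsOpen U) (hconn : IsConnected U)
    (ε : ℝ) (hε : 0 < ε) (u : ℝ × ℝ → ℝ)
    (hu : ContDiffOn ℝ (⊤ : ℕ∞) u U)
    (heq : ∀ x ∈ U,
      (d1 u x) ^ 2 * d1 (d1 u) x + 2 * d1 u x * d2 u x * d1 (d2 u) x
        + (d2 u x) ^ 2 * d2 (d2 u) x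
      + ε * (d1 (d1 u) x + d2 (d2 u) x) = 0) :
    ∀ z ∈ U, 0 ≤ -(d1 (d1 u) z * d2 (d2 u) z - (d1 (d2 u) z) ^ 2) := by
  intro z hz
  have h := heq z hz
  set p := d1 u z with hp
  set q := d2 u z with hq
  set a := d1 (d1 u) z with ha
  set b := d1 (d2 u) z with hb
  set c := d2 (d2 u) z with hc
  rcases eq_or_ne (p ^ 2 + q ^ 2) 0 with h0 | h0
  · -- critical point: Du = 0, so ε(a+c) = 0, hence c = -a and det ≤ 0
    have hp0 : p = 0 := by nlinarith [sq_nonneg p, sq_nonneg q]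
    have hq0 : q = 0 := by nlinarith [sq_nonneg p, sq_nonneg q]
    have hac : ε * (a + c) = 0 := by
      rw [hp0, hq0] at h; linarith
    have hac' : a + c = 0 := by
      rcases mul_eq_zero.mp hac with h' | h'
      · exact absurd h' (ne_of_gt hε)
      · exact h'
    have hca : c = -a := by linarith
    have : a * c = -a ^ 2 := by rw [hca]; ring
    nlinarith [sq_nonneg a, sq_nonneg b]
  · have hpos : 0 < p ^ 2 + q ^ 2 :=
      lt_of_le_of_ne (by positivity) (Ne.symm h0)
    have h' : ε * (a + c) ^ 2 = -(p ^ 2 * a + 2 * p * q * b + q ^ 2 * c) * (a + c) := by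
      have h1 : ε * (a + c) = -(p ^ 2 * a + 2 * p * q * b + q ^ 2 * c) := by linarith
      calc ε * (a + c) ^ 2 = (ε * (a + c)) * (a + c) := by ring
        _ = -(p ^ 2 * a + 2 * p * q * b + q ^ 2 * c) * (a + c) := by rw [h1]
    have key : (b ^ 2 - a * c) * (p ^ 2 + q ^ 2)
        = (a * p + b * q) ^ 2 + (b * p + c * q) ^ 2 + ε * (a + c) ^ 2 := by
      rw [h']; ring
    nlinarith [key, sq_nonneg (a * p + b * q), sq_nonneg (b * p + c * q),
      mul_nonneg hε.le (sq_nonneg (a + c)), hpos]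
end

section
/- Let u be smooth on U ⊂ ℝ² with -Δ_∞ u - εΔu = 0, ε > 0. At any point z ∈ U where Du(z) ≠ 0 and |Du| is differentiable, |D(|Du|)(z)|² = -det D²u(z) - ε(Δu(z))²/|Du(z)|². -/
/-- If `u` is smooth on open `U ⊂ ℝ²` with `-Δ_∞ u - εΔu = 0`, `ε > 0`, then at any point
`z ∈ U` with `Du(z) ≠ 0` where `|Du|` is differentiable,
`|D(|Du|)(z)|² = -det D²u(z) - ε(Δu(z))²/|Du(z)|²`. -/
theorem stmt6 (U : Set (ℝ × ℝ)) (hU : IsOpen U) (ε : ℝ) (hε : 0 < ε) (u : ℝ × ℝ → ℝ)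
    (hu : ContDiffOn ℝ (⊤ : ℕ∞) u U)
    (heq : ∀ x ∈ U,
      (d1 u x) ^ 2 * d1 (d1 u) x + 2 * d1 u x * d2 u x * d1 (d2 u) x
        + (d2 u x) ^ 2 * d2 (d2 u) x
      + ε * (d1 (d1 u) x + d2 (d2 u) x) = 0)
    (z : ℝ × ℝ) (hz : z ∈ U) (hDu : (d1 u z, d2 u z) ≠ (0, 0))
    (hdiff : DifferentiableAt ℝ (fun x => Real.sqrt ((d1 u x) ^ 2 + (d2 u x) ^ 2)) z) :
    (d1 (fun x => Real.sqrt ((d1 u x) ^ 2 + (d2 u x) ^ 2)) z) ^ 2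
      + (d2 (fun x => Real.sqrt ((d1 u x) ^ 2 + (d2 u x) ^ 2)) z) ^ 2 =
    -(d1 (d1 u) z * d2 (d2 u) z - (d1 (d2 u) z) ^ 2)
      - ε * (d1 (d1 u) z + d2 (d2 u) z) ^ 2 / ((d1 u z) ^ 2 + (d2 u z) ^ 2) := by
  have hcd : ContDiffAt ℝ (⊤ : ℕ∞) u z := hu.contDiffAt (hU.mem_nhds hz)
  -- second derivative
  have hf''cd : ContDiffAt ℝ 1 (fderiv ℝ u) z := hcd.fderiv_right (by exact WithTop.coe_le_coe.2 le_top)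
  have hf'' : HasFDerivAt (fderiv ℝ u) (fderiv ℝ (fderiv ℝ u) z) z :=
    (hf''cd.differentiableAt one_ne_zero).hasFDerivAt
  set f'' := fderiv ℝ (fderiv ℝ u) z with hf''def
  have hev : ∀ᶠ y in nhds z, HasFDerivAt u (fderiv ℝ u y) y := by
    filter_upwards [hU.mem_nhds hz] with y hy
    exact ((hu.contDiffAt (hU.mem_nhds hy)).differentiableAt (by simp)).hasFDerivAt
  have hsym : ∀ v w, f'' v w = f'' w v :=
    second_derivative_symmetric_of_eventually hev hf''
  -- derivatives of directional derivatives
  have hA : ∀ v : ℝ × ℝ, HasFDerivAt (fun x => fderiv ℝ u x v)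
      ((ContinuousLinearMap.apply ℝ ℝ v).comp f'') z :=
    fun v => ((ContinuousLinearMap.apply ℝ ℝ v).hasFDerivAt).comp z hf''
  have hd1u : d1 u = fun x => fderiv ℝ u x (1, 0) := rfl
  have hd2u : d2 u = fun x => fderiv ℝ u x (0, 1) := rfl
  set a := d1 u z with ha
  set b := d2 u z with hb
  set A := f'' (1, 0) (1, 0) with hA11
  set B := f'' (1, 0) (0, 1) with hA12
  set C := f'' (0, 1) (0, 1) with hA22
  -- express second partials
  have e11 : d1 (d1 u) z = A := by
    rw [d1, hd1u, (hA (1, 0)).fderiv]; rfl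
  have e12 : d1 (d2 u) z = B := by
    rw [d1, hd2u, (hA (0, 1)).fderiv]; rfl
  have e21 : d2 (d1 u) z = B := by
    rw [d2, hd1u, (hA (1, 0)).fderiv]
    exact hsym (0,1) (1,0)
  have e22 : d2 (d2 u) z = C := by
    rw [d2, hd2u, (hA (0, 1)).fderiv]; rfl
  -- the gradient-norm-squared function
  have hg : HasFDerivAt (fun x => (d1 u x) ^ 2 + (d2 u x) ^ 2)
      (((2 * a) • ((ContinuousLinearMap.apply ℝ ℝ (1,0)).comp f''))
        + ((2 * b) • ((ContinuousLinearMap.apply ℝ ℝ (0,1)).comp f''))) z := by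
    have h1 := (hA (1,0)).mul (hA (1,0))
    have h2 := (hA (0,1)).mul (hA (0,1))
    have := h1.add h2
    refine (this.congr_fderiv ?_).congr_of_eventuallyEq (Filter.Eventually.of_forall fun x => ?_)
    · have r1 : (fderiv ℝ u z) (1,0) = a := rfl
      have r2 : (fderiv ℝ u z) (0,1) = b := rfl
      rw [r1, r2]; module
    · simp [hd1u, hd2u]; ring
  have hab : (0:ℝ) < a ^ 2 + b ^ 2 := by
    rcases (by by_contra h; push_neg at h; exact hDu (by simp [← ha, ← hb, h.1, h.2]) :
      a ≠ 0 ∨ b ≠ 0) with h | h <;> positivity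
  have hgz : ((fun x => (d1 u x) ^ 2 + (d2 u x) ^ 2) z) ≠ 0 := hab.ne'
  have hs : HasFDerivAt (fun x => Real.sqrt ((d1 u x) ^ 2 + (d2 u x) ^ 2))
      ((1 / (2 * Real.sqrt (a ^ 2 + b ^ 2))) •
        (((2 * a) • ((ContinuousLinearMap.apply ℝ ℝ (1,0)).comp f''))
        + ((2 * b) • ((ContinuousLinearMap.apply ℝ ℝ (0,1)).comp f'')))) z :=
    hg.sqrt hgz
  set s := Real.sqrt (a ^ 2 + b ^ 2) with hsdef
  have hspos : 0 < s := Real.sqrt_pos.2 hab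
  have hs2 : s ^ 2 = a ^ 2 + b ^ 2 := Real.sq_sqrt hab.le
  have eL1 : d1 (fun x => Real.sqrt ((d1 u x) ^ 2 + (d2 u x) ^ 2)) z
      = (1 / (2 * s)) * (2 * a * A + 2 * b * B) := by
    rw [d1, hs.fderiv]
    simp [hA11, hA12]
    ring
  have eL2 : d2 (fun x => Real.sqrt ((d1 u x) ^ 2 + (d2 u x) ^ 2)) z
      = (1 / (2 * s)) * (2 * a * B + 2 * b * C) := by
    rw [d2, hs.fderiv]
    have := hsym (0,1) (1,0)
    simp [hA22]
    rw [show f'' (0,1) (1,0) = B from hsym (0,1) (1,0)]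
    ring
  have hpde : a ^ 2 * A + 2 * a * b * B + b ^ 2 * C + ε * (A + C) = 0 := by
    have := heq z hz
    rwa [e11, e12, e22, ← ha, ← hb] at this
  rw [eL1, eL2, e11, e12, e22]
  have hsne : s ≠ 0 := hspos.ne'
  field_simp
  rw [hs2]
  linear_combination ((a ^ 2 + b ^ 2) * (A + C)) * hpde
end

section
/- The Aronsson function w(x₁,x₂) = x₁^{4/3} - x₂^{4/3} is infinity-harmonic on the open set {x ∈ ℝ² : x₁ ≠ 0 and x₂ ≠ 0}, i.e. Δ_∞ w = w₁²w₁₁ + 2w₁w₂w₁₂ + w₂²w₂₂ = 0 there. -/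
/-- Aronsson's function `w(x₁,x₂) = |x₁|^{4/3} - |x₂|^{4/3}`. -/
noncomputable def aronsson (x : ℝ × ℝ) : ℝ :=
  |x.1| ^ ((4 : ℝ) / 3) - |x.2| ^ ((4 : ℝ) / 3)

open Filter Topology

theorem hasDerivAt_mul_abs_rpow_sub_two_mul_self (p : ℝ) {t : ℝ} (ht : t ≠ 0) :
    HasDerivAt (fun s => p * |s| ^ (p - 2) * s) (p * (p - 1) * |t| ^ (p - 2)) t := by
  have h : HasDerivAt (fun s => p * |s| ^ (p - 2) * s) _ t :=
    (((hasDerivAt_abs ht).rpow_const (.inl (abs_ne_zero.mpr ht))).const_mul p).mul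
      (hasDerivAt_id' t)
  convert h using 1
  rw [Real.rpow_sub_one (abs_ne_zero.mpr ht)]
  field_simp
  rw [mul_assoc _ _ t, sign_mul_self]
  ring

theorem abs_rpow_deriv_sq_mul_second_deriv (p : ℝ) {t : ℝ} (ht : t ≠ 0) :
    (p * |t| ^ (p - 2) * t) ^ 2 * (p * (p - 1) * |t| ^ (p - 2)) =
      p ^ 3 * (p - 1) * |t| ^ (3 * p - 4) := by
  have ht' : 0 < |t| := abs_pos.mpr ht
  have h : |t| ^ (3 * p - 4) = (|t| ^ (p - 2)) ^ 3 * |t| ^ 2 := by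
    rw [← Real.rpow_natCast, ← Real.rpow_natCast, ← Real.rpow_mul ht'.le, ← Real.rpow_add ht']
    ring_nf
  rw [h, sq_abs]
  ring

noncomputable def infLaplacian (u : ℝ × ℝ → ℝ) (x : ℝ × ℝ) : ℝ :=
  d1 u x ^ 2 * d1 (d1 u) x + 2 * d1 u x * d2 u x * d1 (d2 u) x + d2 u x ^ 2 * d2 (d2 u) x

section Partials

variable {f g : ℝ × ℝ → ℝ} {x : ℝ × ℝ}

theorem HasFDerivAt.d1_eq {f' : ℝ × ℝ →L[ℝ] ℝ} (h : HasFDerivAt f f' x) : d1 f x = f' (1, 0) := by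
  rw [d1, h.fderiv]

theorem HasFDerivAt.d2_eq {f' : ℝ × ℝ →L[ℝ] ℝ} (h : HasFDerivAt f f' x) : d2 f x = f' (0, 1) := by
  rw [d2, h.fderiv]

theorem Filter.EventuallyEq.d1_eq (h : f =ᶠ[𝓝 x] g) : d1 f x = d1 g x := by
  rw [d1, d1, h.fderiv_eq]

theorem Filter.EventuallyEq.d2_eq (h : f =ᶠ[𝓝 x] g) : d2 f x = d2 g x := by
  rw [d2, d2, h.fderiv_eq]

end Partials

section Separable

variable {φ ψ φ' ψ' : ℝ → ℝ} {x : ℝ × ℝ} {a b : ℝ}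

theorem hasFDerivAt_comp_fst_sub_comp_snd (hφ : HasDerivAt φ a x.1) (hψ : HasDerivAt ψ b x.2) :
    HasFDerivAt (fun y : ℝ × ℝ => φ y.1 - ψ y.2)
      (a • ContinuousLinearMap.fst ℝ ℝ ℝ - b • ContinuousLinearMap.snd ℝ ℝ ℝ) x :=
  (hφ.comp_hasFDerivAt x hasFDerivAt_fst).sub (hψ.comp_hasFDerivAt x hasFDerivAt_snd)

theorem infLaplacian_comp_fst_sub_comp_snd
    (hφ : ∀ᶠ s in 𝓝 x.1, HasDerivAt φ (φ' s) s) (hψ : ∀ᶠ s in 𝓝 x.2, HasDerivAt ψ (ψ' s) s)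
    (hφ' : HasDerivAt φ' a x.1) (hψ' : HasDerivAt ψ' b x.2) :
    infLaplacian (fun y => φ y.1 - ψ y.2) x = φ' x.1 ^ 2 * a - ψ' x.2 ^ 2 * b := by
  have hu : ∀ᶠ y in 𝓝 x, HasFDerivAt (fun y : ℝ × ℝ => φ y.1 - ψ y.2)
      (φ' y.1 • ContinuousLinearMap.fst ℝ ℝ ℝ - ψ' y.2 • ContinuousLinearMap.snd ℝ ℝ ℝ) y := by
    filter_upwards [(continuous_fst.tendsto x).eventually hφ,
      (continuous_snd.tendsto x).eventually hψ] with y hy₁ hy₂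
    exact hasFDerivAt_comp_fst_sub_comp_snd hy₁ hy₂
  -- The first partials are kept in the shape `φ₁ y.1 - ψ₁ y.2` (with a zero function) so that
  -- `hasFDerivAt_comp_fst_sub_comp_snd` also computes the second partials.
  have hd1 : d1 (fun y => φ y.1 - ψ y.2) =ᶠ[𝓝 x] fun y => φ' y.1 - 0 := by
    filter_upwards [hu] with y hy
    simp [hy.d1_eq]
  have hd2 : d2 (fun y => φ y.1 - ψ y.2) =ᶠ[𝓝 x] fun y => 0 - ψ' y.2 := by
    filter_upwards [hu] with y hy
    simp [hy.d2_eq]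
  have h0₁ : HasDerivAt (fun _ : ℝ => (0 : ℝ)) 0 x.1 := hasDerivAt_const _ _
  have h0₂ : HasDerivAt (fun _ : ℝ => (0 : ℝ)) 0 x.2 := hasDerivAt_const _ _
  rw [infLaplacian, hd1.d1_eq, hd2.d1_eq, hd2.d2_eq, hd1.self_of_nhds, hd2.self_of_nhds,
    (hasFDerivAt_comp_fst_sub_comp_snd hφ' h0₂).d1_eq,
    (hasFDerivAt_comp_fst_sub_comp_snd h0₁ hψ').d1_eq,
    (hasFDerivAt_comp_fst_sub_comp_snd h0₁ hψ').d2_eq]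
  simp [sub_eq_add_neg]

end Separable

/-- The Aronsson function is infinity-harmonic away from the coordinate axes:
`Δ_∞ w = w₁²w₁₁ + 2w₁w₂w₁₂ + w₂²w₂₂ = 0` whenever `x₁ ≠ 0` and `x₂ ≠ 0`. -/
theorem stmt9 (x : ℝ × ℝ) (h1 : x.1 ≠ 0) (h2 : x.2 ≠ 0) :
    (d1 aronsson x) ^ 2 * d1 (d1 aronsson) x
      + 2 * d1 aronsson x * d2 aronsson x * d1 (d2 aronsson) x
      + (d2 aronsson x) ^ 2 * d2 (d2 aronsson) x = 0 := by
  have hφ (s : ℝ) : HasDerivAt (fun s => |s| ^ ((4 : ℝ) / 3))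
      (4 / 3 * |s| ^ ((4 : ℝ) / 3 - 2) * s) s :=
    hasDerivAt_abs_rpow s (by norm_num)
  change infLaplacian (fun y => |y.1| ^ ((4 : ℝ) / 3) - |y.2| ^ ((4 : ℝ) / 3)) x = 0
  rw [infLaplacian_comp_fst_sub_comp_snd (.of_forall hφ) (.of_forall hφ)
      (hasDerivAt_mul_abs_rpow_sub_two_mul_self _ h1)
      (hasDerivAt_mul_abs_rpow_sub_two_mul_self _ h2),
    abs_rpow_deriv_sq_mul_second_deriv _ h1, abs_rpow_deriv_sq_mul_second_deriv _ h2]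
  norm_num
end

section
/- Let α > 0 and set p_α = 3 if α ≥ 1 and p_α = 6/(3-α) if 0 < α < 1. For the Aronsson function w, the function |D(|Dw|^α)| = (α/2)|Dw|^{α-2}|D(|Dw|²)| belongs to L^p of the unit square for every 1 ≤ p < p_α, but not for p = p_α (when α < 3). -/
/-!
For `0 < v ≤ u` the sums `u^{2/3} + v^{2/3}` and `u^{-2/3} + v^{-2/3}` lie within a factor `2` of
`u^{2/3}` and `v^{-2/3}`, so `|D(|Dw|^α)|^p` is comparable, up to constants, to the weight
`max(|x₁|,|x₂|)^b · min(|x₁|,|x₂|)^a` with `a = -p/3`, `b = p(α-2)/3`.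
That weight is integrable on the square iff `a > -1` and `a + b > -2`. Sufficiency: moving part of
the exponent of `min` onto `max` dominates it by products `|x₁|^{a'} |x₂|^{b'}` with `a', b' > -1`.
Necessity: by Fubini, the slice `y ↦ x^b y^a` over `0 < y < x` must be integrable, and so must its
integral `x^{a+b+1}/(a+1)`. For our `a, b` these conditions read `p < 3` and `p(3-α) < 6`,
i.e. `p < p_α`.
-/

open MeasureTheory Real Set

theorem integrableOn_iff_of_comparable {X : Type*} [MeasurableSpace X] {μ : Measure X}
    {s : Set X} {f g : X → ℝ} {k K : ℝ} (hf : AEStronglyMeasurable f (μ.restrict s))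
    (hg : AEStronglyMeasurable g (μ.restrict s)) (hk : 0 < k)
    (h : ∀ᵐ x ∂μ.restrict s, 0 ≤ g x ∧ k * g x ≤ f x ∧ f x ≤ K * g x) :
    IntegrableOn f s μ ↔ IntegrableOn g s μ := by
  constructor
  · intro hfi
    refine (hfi.norm.const_mul k⁻¹).mono' hg ?_
    filter_upwards [h] with x ⟨hg0, hlow, _⟩
    rw [Real.norm_of_nonneg hg0, Real.norm_of_nonneg ((mul_nonneg hk.le hg0).trans hlow),
      le_inv_mul_iff₀ hk]
    exact hlow
  · intro hgi
    refine (hgi.const_mul K).mono' hf ?_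
    filter_upwards [h] with x ⟨hg0, hlow, hup⟩
    rwa [Real.norm_of_nonneg ((mul_nonneg hk.le hg0).trans hlow)]

theorem ae_fst_ne_zero_and_snd_ne_zero : ∀ᵐ x : ℝ × ℝ, x.1 ≠ 0 ∧ x.2 ≠ 0 :=
  (Measure.quasiMeasurePreserving_fst.ae (volume.ae_ne 0)).and
    (Measure.quasiMeasurePreserving_snd.ae (volume.ae_ne 0))

theorem integrableOn_abs_rpow {c : ℝ} (hc : -1 < c) :
    IntegrableOn (fun x : ℝ => |x| ^ c) (Ioo (-1) 1) := by
  have hpos : IntervalIntegrable (fun x : ℝ => |x| ^ c) volume 0 1 := by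
    rw [intervalIntegrable_iff_integrableOn_Ioo_of_le zero_le_one]
    exact ((intervalIntegral.integrableOn_Ioo_rpow_iff one_pos).2 hc).congr_fun
      (fun x hx => by rw [abs_of_pos hx.1]) measurableSet_Ioo
  have hneg : IntervalIntegrable (fun x : ℝ => |x| ^ c) volume (-1) 0 := by
    simpa using (IntervalIntegrable.iff_comp_neg (by simp)).1 hpos |>.symm
  rw [← intervalIntegrable_iff_integrableOn_Ioo_of_le (by norm_num)]
  exact hneg.trans hpos

theorem rpow_mul_rpow_le_of_le {m M : ℝ} (hm : 0 < m) (hmM : m ≤ M) (b : ℝ) {a a' : ℝ}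
    (ha' : a' ≤ a) : M ^ b * m ^ a ≤ M ^ (a + b - a') * m ^ a' := by
  have hM : 0 < M := hm.trans_le hmM
  calc M ^ b * m ^ a = M ^ b * m ^ (a - a') * m ^ a' := by
        rw [mul_assoc, ← rpow_add hm, sub_add_cancel]
    _ ≤ M ^ b * M ^ (a - a') * m ^ a' := by gcongr
    _ = M ^ (a + b - a') * m ^ a' := by rw [← rpow_add hM]; ring_nf

theorem rpow_bounds_of_le_of_le_two_mul {x y : ℝ} (hx : 0 < x) (hxy : x ≤ y) (hy : y ≤ 2 * x)
    (e : ℝ) : (2:ℝ) ^ (-|e|) * x ^ e ≤ y ^ e ∧ y ^ e ≤ 2 ^ |e| * x ^ e := by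
  have hy0 : 0 < y := hx.trans_le hxy
  rcases le_total 0 e with he | he
  · rw [abs_of_nonneg he]
    constructor
    · calc (2:ℝ) ^ (-e) * x ^ e ≤ 1 * x ^ e := by
            gcongr; exact rpow_le_one_of_one_le_of_nonpos one_le_two (by linarith)
        _ ≤ y ^ e := by rw [one_mul]; gcongr
    · calc y ^ e ≤ (2 * x) ^ e := by gcongr
        _ = 2 ^ e * x ^ e := mul_rpow zero_le_two hx.le
  · rw [abs_of_nonpos he, neg_neg]
    constructor
    · calc (2:ℝ) ^ e * x ^ e = (2 * x) ^ e := (mul_rpow zero_le_two hx.le).symm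
        _ ≤ y ^ e := rpow_le_rpow_of_nonpos hy0 hy he
    · calc y ^ e ≤ x ^ e := rpow_le_rpow_of_nonpos hx hxy he
        _ ≤ 2 ^ (-e) * x ^ e := by
            exact le_mul_of_one_le_left (by positivity) (one_le_rpow one_le_two (by linarith))

noncomputable def maxMinWeight (a b : ℝ) (x : ℝ × ℝ) : ℝ :=
  max |x.1| |x.2| ^ b * min |x.1| |x.2| ^ a

namespace maxMinWeight

variable {a b : ℝ}

theorem nonneg (x : ℝ × ℝ) : 0 ≤ maxMinWeight a b x := by
  unfold maxMinWeight; positivity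

theorem measurable : Measurable (maxMinWeight a b) := by
  unfold maxMinWeight; fun_prop

theorem apply_of_le {x y : ℝ} (hy : 0 ≤ y) (hyx : y ≤ x) :
    maxMinWeight a b (x, y) = x ^ b * y ^ a := by
  rw [maxMinWeight, abs_of_nonneg hy, abs_of_nonneg (hy.trans hyx), max_eq_left hyx,
    min_eq_right hyx]

theorem le_sum_products (x : ℝ × ℝ) :
    maxMinWeight a b x ≤ |x.1| ^ a * |x.2| ^ b + |x.1| ^ b * |x.2| ^ a := by
  rcases le_total |x.1| |x.2| with h | h
  · rw [maxMinWeight, max_eq_right h, min_eq_left h, mul_comm]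
    exact le_add_of_nonneg_right (by positivity)
  · rw [maxMinWeight, max_eq_left h, min_eq_right h]
    exact le_add_of_nonneg_left (by positivity)

theorem le_shift_exponent {x : ℝ × ℝ} (hx : x.1 ≠ 0 ∧ x.2 ≠ 0) {a' : ℝ} (ha' : a' ≤ a) :
    maxMinWeight a b x ≤ maxMinWeight a' (a + b - a') x :=
  rpow_mul_rpow_le_of_le (lt_min (abs_pos.2 hx.1) (abs_pos.2 hx.2)) min_le_max b ha'

theorem integrableOn (ha : -1 < a) (hab : -2 < a + b) :
    IntegrableOn (maxMinWeight a b) (Ioo (-1) 1 ×ˢ Ioo (-1) 1) := by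
  set a' := min a ((a + b) / 2)
  set b' := a + b - a'
  have ha' : -1 < a' := lt_min ha (by linarith)
  have hb' : -1 < b' := by have := min_le_right a ((a + b) / 2); linarith
  have hprod {c d : ℝ} (hc : -1 < c) (hd : -1 < d) :
      IntegrableOn (fun x : ℝ × ℝ => |x.1| ^ c * |x.2| ^ d) (Ioo (-1) 1 ×ˢ Ioo (-1) 1) := by
    rw [IntegrableOn, Measure.volume_eq_prod, ← Measure.prod_restrict]
    exact (integrableOn_abs_rpow hc).mul_prod (integrableOn_abs_rpow hd)
  refine ((hprod ha' hb').add (hprod hb' ha')).mono' measurable.aestronglyMeasurable ?_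
  filter_upwards [ae_restrict_of_ae ae_fst_ne_zero_and_snd_ne_zero] with x hx
  rw [Real.norm_of_nonneg (nonneg x)]
  exact (le_shift_exponent hx (min_le_left _ _)).trans (le_sum_products x)

theorem exponents_of_integrableOn (h : IntegrableOn (maxMinWeight a b) (Ioo 0 1 ×ˢ Ioo 0 1)) :
    -1 < a ∧ -2 < a + b := by
  set I := Ioo (0:ℝ) 1
  have hprod : Integrable (maxMinWeight a b) ((volume.restrict I).prod (volume.restrict I)) := by
    rwa [Measure.prod_restrict]
  have hslice {x : ℝ} (hx : x ∈ I) (hint : IntegrableOn (fun y => maxMinWeight a b (x, y)) I) :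
      IntegrableOn (fun y => x ^ b * y ^ a) (Ioo 0 x) :=
    (hint.mono_set (Ioo_subset_Ioo_right hx.2.le)).congr_fun
      (fun y hy => apply_of_le hy.1.le hy.2.le) measurableSet_Ioo
  have ha : -1 < a := by
    have : (ae (volume.restrict I)).NeBot := ae_restrict_neBot.2 (by simp [I])
    obtain ⟨x, hx, hint⟩ := ((ae_restrict_mem measurableSet_Ioo).and hprod.prod_right_ae).exists
    have hxb : IsUnit (x ^ b) := (rpow_pos_of_pos hx.1 b).ne'.isUnit
    exact (intervalIntegral.integrableOn_Ioo_rpow_iff hx.1).1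
      ((integrable_const_mul_iff hxb _).1 (hslice hx hint))
  refine ⟨ha, ?_⟩
  have hlow : ∀ᵐ x ∂volume.restrict I,
      ‖(a + 1)⁻¹ * x ^ (a + b + 1)‖ ≤ ∫ y in I, maxMinWeight a b (x, y) := by
    filter_upwards [ae_restrict_mem measurableSet_Ioo, hprod.prod_right_ae] with x hx hint
    have hx0 := hx.1
    have ha1 : 0 < a + 1 := by linarith
    calc ‖(a + 1)⁻¹ * x ^ (a + b + 1)‖ = ∫ y in Ioo 0 x, x ^ b * y ^ a := by
          rw [Real.norm_of_nonneg (by positivity),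
            integral_const_mul, ← integral_Ioc_eq_integral_Ioo,
            ← intervalIntegral.integral_of_le hx0.le, integral_rpow (Or.inl ha),
            zero_rpow (by linarith), sub_zero, mul_div_assoc', mul_comm, ← rpow_add hx0]
          ring_nf
      _ = ∫ y in Ioo 0 x, maxMinWeight a b (x, y) :=
          setIntegral_congr_fun measurableSet_Ioo fun y hy => (apply_of_le hy.1.le hy.2.le).symm
      _ ≤ ∫ y in I, maxMinWeight a b (x, y) :=
          setIntegral_mono_set hint (.of_forall fun y => nonneg _)
            (Ioo_subset_Ioo_right hx.2.le).eventuallyLE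
  have hint : IntegrableOn (fun x => (a + 1)⁻¹ * x ^ (a + b + 1)) I :=
    hprod.integral_prod_left.mono' (by fun_prop) hlow
  have := (intervalIntegral.integrableOn_Ioo_rpow_iff one_pos).1
    ((integrable_const_mul_iff (inv_ne_zero (by linarith)).isUnit _).1 hint)
  linarith

theorem integrableOn_iff :
    IntegrableOn (maxMinWeight a b) (Ioo (-1) 1 ×ˢ Ioo (-1) 1) ↔ -1 < a ∧ -2 < a + b :=
  ⟨fun h => exponents_of_integrableOn
    (h.mono_set (prod_mono (Ioo_subset_Ioo_left (by norm_num))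
      (Ioo_subset_Ioo_left (by norm_num)))),
   fun h => integrableOn h.1 h.2⟩

end maxMinWeight

/-- `|D(|Dw|^α)|` at a point `x` with `|x₁| = u` and `|x₂| = v`. -/
noncomputable def aronssonGradNorm (α u v : ℝ) : ℝ :=
  (α / 2) * ((4 / 3) * √(u ^ ((2:ℝ)/3) + v ^ ((2:ℝ)/3))) ^ (α - 2)
    * ((16 / 27) * √(u ^ (-(2:ℝ)/3) + v ^ (-(2:ℝ)/3)))

namespace aronssonGradNorm

variable {α : ℝ}

theorem symm (α u v : ℝ) : aronssonGradNorm α u v = aronssonGradNorm α v u := by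
  rw [aronssonGradNorm, aronssonGradNorm, add_comm (u ^ ((2:ℝ)/3)), add_comm (u ^ (-(2:ℝ)/3))]

theorem rpow_eq (hα : 0 ≤ α) {u v : ℝ} (hu : 0 ≤ u) (hv : 0 ≤ v) (p : ℝ) :
    aronssonGradNorm α u v ^ p = (α / 2 * (4 / 3) ^ (α - 2) * (16 / 27)) ^ p *
      ((u ^ ((2:ℝ)/3) + v ^ ((2:ℝ)/3)) ^ (p * (α - 2) / 2) *
        (u ^ (-(2:ℝ)/3) + v ^ (-(2:ℝ)/3)) ^ (p / 2)) := by
  have hS : 0 ≤ u ^ ((2:ℝ)/3) + v ^ ((2:ℝ)/3) := by positivity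
  have hT : 0 ≤ u ^ (-(2:ℝ)/3) + v ^ (-(2:ℝ)/3) := by positivity
  have hp1 : aronssonGradNorm α u v = α / 2 * (4 / 3) ^ (α - 2) * (16 / 27) *
      ((u ^ ((2:ℝ)/3) + v ^ ((2:ℝ)/3)) ^ ((α - 2) / 2) *
        (u ^ (-(2:ℝ)/3) + v ^ (-(2:ℝ)/3)) ^ ((1:ℝ) / 2)) := by
    rw [aronssonGradNorm, mul_rpow (by norm_num) (sqrt_nonneg _), sqrt_eq_rpow, sqrt_eq_rpow,
      ← rpow_mul hS]
    ring_nf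
  rw [hp1, mul_rpow (by positivity) (by positivity),
    mul_rpow (x := _ ^ ((α - 2) / 2)) (by positivity) (by positivity), ← rpow_mul hS, ← rpow_mul hT]
  ring_nf

theorem exists_rpow_comparable_of_le (hα : 0 < α) (p : ℝ) :
    ∃ k K : ℝ, 0 < k ∧ ∀ u v : ℝ, 0 < v → v ≤ u →
      k * (u ^ (p * (α - 2) / 3) * v ^ (-p / 3)) ≤ aronssonGradNorm α u v ^ p ∧
      aronssonGradNorm α u v ^ p ≤ K * (u ^ (p * (α - 2) / 3) * v ^ (-p / 3)) := by
  set c := (α / 2 * (4 / 3) ^ (α - 2) * (16 / 27)) ^ p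
  set e := p * (α - 2) / 2 with he
  refine ⟨c * 2 ^ (-|e|) * 2 ^ (-|p / 2|), c * 2 ^ |e| * 2 ^ |p / 2|, by positivity, ?_⟩
  intro u v hv hvu
  have hu : 0 < u := hv.trans_le hvu
  -- `u ^ (2/3)` dominates the first sum, `v ^ (-2/3)` the second
  have hS := rpow_bounds_of_le_of_le_two_mul (rpow_pos_of_pos hu ((2:ℝ)/3))
    (le_add_of_nonneg_right (rpow_nonneg hv.le _))
    (by rw [two_mul]; gcongr) e
  have hT := rpow_bounds_of_le_of_le_two_mul (rpow_pos_of_pos hv (-(2:ℝ)/3))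
    (le_add_of_nonneg_left (rpow_nonneg hu.le _))
    (by rw [two_mul]; exact add_le_add_left (rpow_le_rpow_of_nonpos hv hvu (by norm_num)) _) (p / 2)
  have hu' : (u ^ ((2:ℝ)/3)) ^ e = u ^ (p * (α - 2) / 3) := by
    rw [← rpow_mul hu.le, he]; ring_nf
  have hv' : (v ^ (-(2:ℝ)/3)) ^ (p / 2) = v ^ (-p / 3) := by
    rw [← rpow_mul hv.le]; ring_nf
  rw [hu'] at hS
  rw [hv'] at hT
  rw [rpow_eq hα.le hu.le hv.le]
  constructor
  · calc c * 2 ^ (-|e|) * 2 ^ (-|p / 2|) * (u ^ (p * (α - 2) / 3) * v ^ (-p / 3))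
        = c * ((2 ^ (-|e|) * u ^ (p * (α - 2) / 3)) * (2 ^ (-|p / 2|) * v ^ (-p / 3))) := by ring
      _ ≤ _ := by gcongr; exacts [hS.1, hT.1]
  · calc _ ≤ c * ((2 ^ |e| * u ^ (p * (α - 2) / 3)) * (2 ^ |p / 2| * v ^ (-p / 3))) := by
          gcongr; exacts [hS.2, hT.2]
      _ = c * 2 ^ |e| * 2 ^ |p / 2| * (u ^ (p * (α - 2) / 3) * v ^ (-p / 3)) := by ring

theorem exists_rpow_comparable_maxMinWeight (hα : 0 < α) (p : ℝ) :
    ∃ k K : ℝ, 0 < k ∧ ∀ x : ℝ × ℝ, x.1 ≠ 0 → x.2 ≠ 0 →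
      k * maxMinWeight (-p / 3) (p * (α - 2) / 3) x ≤ aronssonGradNorm α |x.1| |x.2| ^ p ∧
      aronssonGradNorm α |x.1| |x.2| ^ p ≤ K * maxMinWeight (-p / 3) (p * (α - 2) / 3) x := by
  obtain ⟨k, K, hk, hbd⟩ := exists_rpow_comparable_of_le hα p
  refine ⟨k, K, hk, fun x hx₁ hx₂ => ?_⟩
  rcases le_total |x.2| |x.1| with h | h
  · rw [maxMinWeight, max_eq_left h, min_eq_right h]
    exact hbd _ _ (abs_pos.2 hx₂) h
  · rw [maxMinWeight, max_eq_right h, min_eq_left h, symm]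
    exact hbd _ _ (abs_pos.2 hx₁) h

theorem integrableOn_rpow_iff (hα : 0 < α) (p : ℝ) :
    IntegrableOn (fun x : ℝ × ℝ => aronssonGradNorm α |x.1| |x.2| ^ p)
      (Ioo (-1) 1 ×ˢ Ioo (-1) 1) ↔ p < 3 ∧ p * (3 - α) < 6 := by
  obtain ⟨k, K, hk, hbd⟩ := exists_rpow_comparable_maxMinWeight hα p
  have hmeas : Measurable fun x : ℝ × ℝ => aronssonGradNorm α |x.1| |x.2| ^ p := by
    unfold aronssonGradNorm; fun_prop
  have hcomp : ∀ᵐ x ∂volume.restrict (Ioo (-1) 1 ×ˢ Ioo (-1) 1),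
      0 ≤ maxMinWeight (-p / 3) (p * (α - 2) / 3) x ∧
      k * maxMinWeight (-p / 3) (p * (α - 2) / 3) x ≤ aronssonGradNorm α |x.1| |x.2| ^ p ∧
      aronssonGradNorm α |x.1| |x.2| ^ p ≤ K * maxMinWeight (-p / 3) (p * (α - 2) / 3) x := by
    filter_upwards [ae_restrict_of_ae ae_fst_ne_zero_and_snd_ne_zero] with x hx
    exact ⟨maxMinWeight.nonneg x, hbd x hx.1 hx.2⟩
  rw [integrableOn_iff_of_comparable hmeas.aestronglyMeasurable
    maxMinWeight.measurable.aestronglyMeasurable hk hcomp, maxMinWeight.integrableOn_iff]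
  constructor <;> rintro ⟨h₁, h₂⟩ <;> constructor <;> linarith

end aronssonGradNorm

theorem lt_three_and_mul_lt_six_iff {α p pα : ℝ} (hp : 0 ≤ p)
    (hpα : (1 ≤ α → pα = 3) ∧ (α < 1 → pα = 6 / (3 - α))) :
    p < 3 ∧ p * (3 - α) < 6 ↔ p < pα := by
  rcases le_or_gt 1 α with hα | hα
  · rw [hpα.1 hα]
    exact ⟨And.left, fun h => ⟨h, by nlinarith⟩⟩
  · have h3α : 0 < 3 - α := by linarith
    rw [hpα.2 hα, lt_div_iff₀ h3α]
    exact ⟨And.right, fun h => ⟨by nlinarith, h⟩⟩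

/-- For the Aronsson function `w`, with
`|D(|Dw|^α)| = (α/2)|Dw|^{α-2}|D(|Dw|²)|`,
`|Dw| = (4/3)(|x₁|^{2/3}+|x₂|^{2/3})^{1/2}` and
`|D(|Dw|²)| = (16/27)(|x₁|^{-2/3}+|x₂|^{-2/3})^{1/2}`:
letting `p_α = 3` for `α ≥ 1` and `p_α = 6/(3-α)` for `0 < α < 1`, the function
`|D(|Dw|^α)|` is in `L^p` of the unit square for all `1 ≤ p < p_α`,
but not for `p = p_α` when `α < 3`. -/
theorem stmt14 (α : ℝ) (hα : 0 < α) (pα : ℝ)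
    (hpα : (1 ≤ α → pα = 3) ∧ (α < 1 → pα = 6 / (3 - α))) :
    (∀ p : ℝ, 1 ≤ p → p < pα →
      IntegrableOn
        (fun x : ℝ × ℝ =>
          ((α / 2) * ((4 / 3) * Real.sqrt (|x.1| ^ ((2:ℝ)/3) + |x.2| ^ ((2:ℝ)/3))) ^ (α - 2)
            * ((16 / 27) * Real.sqrt (|x.1| ^ (-(2:ℝ)/3) + |x.2| ^ (-(2:ℝ)/3)))) ^ p)
        (Set.Ioo (-1 : ℝ) 1 ×ˢ Set.Ioo (-1 : ℝ) 1)) ∧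
    (α < 3 →
      ¬ IntegrableOn
        (fun x : ℝ × ℝ =>
          ((α / 2) * ((4 / 3) * Real.sqrt (|x.1| ^ ((2:ℝ)/3) + |x.2| ^ ((2:ℝ)/3))) ^ (α - 2)
            * ((16 / 27) * Real.sqrt (|x.1| ^ (-(2:ℝ)/3) + |x.2| ^ (-(2:ℝ)/3)))) ^ pα)
        (Set.Ioo (-1 : ℝ) 1 ×ˢ Set.Ioo (-1 : ℝ) 1)) := by
  have hpα_nonneg : 0 ≤ pα := by
    rcases le_or_gt 1 α with h | h
    · rw [hpα.1 h]; norm_num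
    · rw [hpα.2 h]; exact div_nonneg (by norm_num) (by linarith)
  refine ⟨fun p hp hlt => ?_, fun _ h => ?_⟩
  · exact (aronssonGradNorm.integrableOn_rpow_iff hα p).2
      ((lt_three_and_mul_lt_six_iff (by linarith) hpα).2 hlt)
  · exact lt_irrefl pα ((lt_three_and_mul_lt_six_iff hpα_nonneg hpα).1
      ((aronssonGradNorm.integrableOn_rpow_iff hα pα).1 h))
end
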